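/- arXiv:0908.2943 — 2 statements merged into one kernel-verified Lean document; each statement's English description precedes it below -/
import Mathlib

section
/- For every integer r ≥ 10, the product of the first r primes satisfies p_1 · p_2 · ⋯ · p_r > 2^{p_{r+1}}. -/
/-!
Chebyshev's argument. For a prime `p`, the exponent of `p` in `(30a)! a! / ((15a)! (10a)! (6a)!)`
is `∑ᵢ f(⌊30a / pⁱ⌋)` with `f(j) = j - ⌊j/2⌋ - ⌊j/3⌋ - ⌊j/5⌋ + ⌊j/30⌋ ∈ {0, 1}`, so the quotient
divides `lcm(1, …, 30a)`. It grows like `(2^(1/2) 3^(1/3) 5^(1/5) / 30^(1/30))^(30a) ≈ 2^(39.87a)`,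
and by induction from `a = 60` it is at least `2^(39a)`. The lcm `lcm(1, …, N)` exceeds the
primorial `N#` only by the prime powers `pᵏ` with `p ≤ √N`, at most `4^(√N + ∛N log₂ N)` in all.
Hence `N# ≥ 2^(39N/30 - o(N))`, which beats `2^(N+30)` once `N ≥ 1800`; below that `2^(m+1) < m#`
is checked by evaluation from `m = 29` on. Finally `p₁ ⋯ p_r = (p_{r+1} - 1)#` and `p₁₁ = 31`.
-/

open Finset

namespace Nat

theorem add_div_thirty_le (j : ℕ) : j + j / 30 ≤ j / 2 + j / 3 + j / 5 + 1 := by omega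

theorem thirty_mul_div_add_div_le (a d : ℕ) :
    30 * a / d + a / d ≤ 15 * a / d + 10 * a / d + 6 * a / d + 1 := by
  have h (b c : ℕ) (hc : 0 < c) : b * a / d = b * c * a / d / c := by
    rw [Nat.div_div_eq_div_mul, show b * c * a = b * a * c by ring, Nat.mul_div_mul_right _ _ hc]
  have h1 : a / d = 30 * a / d / 30 := by simpa using h 1 30 (by norm_num)
  rw [h 15 2 two_pos, h 10 3 three_pos, h 6 5 (by norm_num), h1]
  exact add_div_thirty_le (30 * a / d)

theorem factorial_thirty_mul_dvd (a : ℕ) :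
    (30 * a)! * a ! ∣ (15 * a)! * (10 * a)! * (6 * a)! * lcmUpto (30 * a) := by
  refine (factorization_prime_le_iff_dvd (by positivity)
    (by simp [factorial_ne_zero, lcmUpto_ne_zero])).1 fun p hp => ?_
  set b := log p (30 * a) + 1
  have legendre (c : ℕ) (hc : c ≤ 30) :
      (c * a)!.factorization p = ∑ i ∈ Ico 1 b, c * a / p ^ i :=
    factorization_factorial hp (Nat.lt_succ_of_le (log_mono_right (Nat.mul_le_mul_right a hc)))
  have legendre_one : (a !).factorization p = ∑ i ∈ Ico 1 b, a / p ^ i := by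
    simpa using legendre 1 (by norm_num)
  simp only [factorization_mul, ne_eq, mul_eq_zero, factorial_ne_zero, lcmUpto_ne_zero, or_self,
    not_false_eq_true, Finsupp.add_apply]
  rw [legendre 30 le_rfl, legendre_one, legendre 15 (by norm_num), legendre 10 (by norm_num),
    legendre 6 (by norm_num), factorization_lcmUpto _ hp, ← sum_add_distrib]
  calc ∑ i ∈ Ico 1 b, (30 * a / p ^ i + a / p ^ i)
      ≤ ∑ i ∈ Ico 1 b, (15 * a / p ^ i + 10 * a / p ^ i + 6 * a / p ^ i + 1) :=
        sum_le_sum fun i _ => thirty_mul_div_add_div_le a (p ^ i)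
    _ = _ := by simp [sum_add_distrib, b]

theorem two_pow_mul_pow_fifteen_ten_six_le {x y : ℕ} (h : 59 * x ≤ 2 * y) :
    2 ^ 39 * ((15 * x) ^ 15 * (10 * x) ^ 10 * (6 * x) ^ 6) ≤ y ^ 30 * x := by
  have hK : 2 ^ 30 * (2 ^ 39 * 15 ^ 15 * 10 ^ 10 * 6 ^ 6) ≤ 59 ^ 30 := by norm_num
  refine Nat.le_of_mul_le_mul_left ?_ (pow_pos two_pos 30)
  calc 2 ^ 30 * (2 ^ 39 * ((15 * x) ^ 15 * (10 * x) ^ 10 * (6 * x) ^ 6))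
      = 2 ^ 30 * (2 ^ 39 * 15 ^ 15 * 10 ^ 10 * 6 ^ 6) * x ^ 30 * x := by ring
    _ ≤ 59 ^ 30 * x ^ 30 * x := by gcongr
    _ = (59 * x) ^ 30 * x := by ring
    _ ≤ (2 * y) ^ 30 * x := by gcongr
    _ = 2 ^ 30 * (y ^ 30 * x) := by ring

theorem factorial_mul_succ_eq (c n : ℕ) :
    (c * (n + 1))! = (c * n)! * (c * n + 1).ascFactorial c := by
  rw [factorial_mul_ascFactorial, mul_add_one]

theorem two_pow_mul_factorials_le {n : ℕ} (hn : 60 ≤ n) :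
    2 ^ (39 * n) * ((15 * n)! * (10 * n)! * (6 * n)!) ≤ (30 * n)! * n ! := by
  induction n, hn using Nat.le_induction with
  | base => decide +kernel
  | succ n hn ih =>
    have hasc (c : ℕ) : (c * n + 1).ascFactorial c ≤ (c * (n + 1)) ^ c := by
      simpa [mul_add_one] using ascFactorial_le_pow_add (c * n) c
    calc 2 ^ (39 * (n + 1)) * ((15 * (n + 1))! * (10 * (n + 1))! * (6 * (n + 1))!)
        = 2 ^ (39 * n) * ((15 * n)! * (10 * n)! * (6 * n)!) * (2 ^ 39 *
            ((15 * n + 1).ascFactorial 15 * (10 * n + 1).ascFactorial 10 *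
              (6 * n + 1).ascFactorial 6)) := by
          simp only [factorial_mul_succ_eq]; ring
      _ ≤ (30 * n)! * n ! * (2 ^ 39 *
            ((15 * (n + 1)) ^ 15 * (10 * (n + 1)) ^ 10 * (6 * (n + 1)) ^ 6)) :=
          Nat.mul_le_mul ih (Nat.mul_le_mul_left _
            (Nat.mul_le_mul (Nat.mul_le_mul (hasc 15) (hasc 10)) (hasc 6)))
      _ ≤ (30 * n)! * n ! * ((30 * n + 1) ^ 30 * (n + 1)) := by
          gcongr _ * ?_; exact two_pow_mul_pow_fifteen_ten_six_le (by omega)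
      _ ≤ (30 * n)! * n ! * ((30 * n + 1).ascFactorial 30 * (n + 1)) := by
          gcongr; exact pow_succ_le_ascFactorial _ _
      _ = (30 * (n + 1))! * (n + 1)! := by
          rw [factorial_mul_succ_eq, factorial_succ]; ring

theorem two_pow_le_lcmUpto {n : ℕ} (hn : 60 ≤ n) : 2 ^ (39 * n) ≤ lcmUpto (30 * n) := by
  have hden : 0 < (15 * n)! * (10 * n)! * (6 * n)! := by positivity
  refine le_of_mul_le_mul_right ?_ hden
  calc 2 ^ (39 * n) * ((15 * n)! * (10 * n)! * (6 * n)!) ≤ (30 * n)! * n ! :=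
        two_pow_mul_factorials_le hn
    _ ≤ (15 * n)! * (10 * n)! * (6 * n)! * lcmUpto (30 * n) :=
        le_of_dvd (mul_pos hden (lcmUpto_pos _)) (factorial_thirty_mul_dvd n)
    _ = lcmUpto (30 * n) * ((15 * n)! * (10 * n)! * (6 * n)!) := mul_comm _ _

theorem one_le_factorization_primorial {p n : ℕ} (hp : p.Prime) (h : p ≤ n) :
    1 ≤ (primorial n).factorization p :=
  hp.factorization_pos_of_dvd (primorial_ne_zero n) (hp.dvd_primorial_iff.2 h)

theorem lcmUpto_dvd_primorial_mul {N s t : ℕ} (hs : N < (s + 1) ^ 2) (ht : N < (t + 1) ^ 3) :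
    lcmUpto N ∣ primorial N * primorial s * primorial t ^ log 2 N := by
  have hne (n : ℕ) := primorial_ne_zero n
  refine (factorization_prime_le_iff_dvd (lcmUpto_ne_zero N) (by simp [hne])).1 fun p hp => ?_
  rw [factorization_lcmUpto N hp, factorization_mul (by simp [hne]) (by simp [hne]),
    factorization_mul (hne N) (hne s), factorization_pow]
  simp only [Finsupp.add_apply, Finsupp.smul_apply, smul_eq_mul]
  set k := log p N
  have hpk {i : ℕ} (hi : 1 ≤ i) (hik : i ≤ k) : p ^ i ≤ N :=
    pow_le_of_le_log (by rintro rfl; simp [k] at hik; omega) hik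
  have hk : k ≤ log 2 N := log_anti_left one_lt_two hp.two_le
  have h1 : 1 ≤ k → 1 ≤ (primorial N).factorization p := fun hk =>
    one_le_factorization_primorial hp (by simpa using hpk le_rfl hk)
  have h2 : 2 ≤ k → 1 ≤ (primorial s).factorization p := fun hk =>
    one_le_factorization_primorial hp (Nat.lt_add_one_iff.1
      ((Nat.pow_lt_pow_iff_left two_ne_zero).1 ((hpk one_le_two hk).trans_lt hs)))
  have h3 : 3 ≤ k → log 2 N ≤ log 2 N * (primorial t).factorization p := fun hk =>
    Nat.le_mul_of_pos_right _ (one_le_factorization_primorial hp (Nat.lt_add_one_iff.1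
      ((Nat.pow_lt_pow_iff_left three_ne_zero).1 ((hpk (by norm_num) hk).trans_lt ht))))
  omega

theorem exists_pow_le_lt_succ_pow {k : ℕ} (hk : k ≠ 0) (N : ℕ) :
    ∃ t, t ^ k ≤ N ∧ N < (t + 1) ^ k := by
  have hex : ∃ t, N < (t + 1) ^ k :=
    ⟨N, (lt_add_one N).trans_le (Nat.le_self_pow hk _)⟩
  refine ⟨Nat.find hex, ?_, Nat.find_spec hex⟩
  rcases h : Nat.find hex with _ | t
  · simp [hk]
  · exact not_lt.1 (Nat.find_min hex (h ▸ lt_add_one t))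

theorem pow_three_le_two_pow {k : ℕ} (hk : 10 ≤ k) : k ^ 3 ≤ 2 ^ k := by
  induction k, hk using Nat.le_induction with
  | base => norm_num
  | succ k hk ih =>
    have : 10 * (k * k) ≤ k * (k * k) := Nat.mul_le_mul_right _ hk
    calc (k + 1) ^ 3 ≤ 2 * k ^ 3 := by nlinarith
      _ ≤ 2 ^ (k + 1) := by rw [pow_succ 2 k]; omega

theorem lcmUpto_le_primorial_mul_two_pow {N s t : ℕ} (hs : N < (s + 1) ^ 2)
    (ht : N < (t + 1) ^ 3) :
    lcmUpto N ≤ primorial N * 2 ^ (2 * (s + t * log 2 N)) := by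
  calc lcmUpto N ≤ primorial N * primorial s * primorial t ^ log 2 N :=
        le_of_dvd (by simp [primorial_pos]) (lcmUpto_dvd_primorial_mul hs ht)
    _ ≤ primorial N * 4 ^ s * (4 ^ t) ^ log 2 N := by
        gcongr <;> exact primorial_le_four_pow _
    _ = primorial N * 2 ^ (2 * (s + t * log 2 N)) := by
        rw [show (4 : ℕ) = 2 ^ 2 by norm_num, ← pow_mul, ← pow_mul, ← pow_mul, mul_assoc,
          ← pow_add, mul_add]

theorem two_pow_succ_lt_primorial_of_le {m : ℕ} (hm : 1800 ≤ m) :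
    2 ^ (m + 1) < primorial m := by
  set n := m / 30
  set N := 30 * n
  obtain ⟨s, hs, hs'⟩ := exists_pow_le_lt_succ_pow two_ne_zero N
  obtain ⟨t, ht, ht'⟩ := exists_pow_le_lt_succ_pow three_ne_zero N
  set L := log 2 N
  have hN : 1800 ≤ N := by omega
  have hs42 : 42 ≤ s := by
    by_contra! h
    have : (s + 1) ^ 2 ≤ 42 ^ 2 := Nat.pow_le_pow_left h 2
    omega
  have ht12 : 12 ≤ t := by
    by_contra! h
    have : (t + 1) ^ 3 ≤ 12 ^ 3 := Nat.pow_le_pow_left h 3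
    omega
  have hLt : L ≤ t := by
    by_contra! h
    have h2L : 2 ^ L ≤ N := pow_log_le_self 2 (by omega)
    have : (t + 1) ^ 3 ≤ 2 ^ L :=
      (pow_three_le_two_pow (by omega)).trans (Nat.pow_le_pow_right two_pos h)
    omega
  have hexp : m + 1 + 2 * (s + t * L) < 39 * n := by
    have h1 : 42 * s ≤ N := by nlinarith
    have h2 : 12 * (t * L) ≤ N :=
      calc 12 * (t * L) ≤ 12 * (t * t) := by gcongr
        _ ≤ t * (t * t) := Nat.mul_le_mul_right _ ht12
        _ = t ^ 3 := by ring
        _ ≤ N := ht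
    omega
  have key : 2 ^ (m + 1) * 2 ^ (2 * (s + t * L)) < primorial N * 2 ^ (2 * (s + t * L)) :=
    calc 2 ^ (m + 1) * 2 ^ (2 * (s + t * L)) < 2 ^ (39 * n) := by
          rw [← pow_add]; exact Nat.pow_lt_pow_right one_lt_two hexp
      _ ≤ lcmUpto N := two_pow_le_lcmUpto (by omega)
      _ ≤ primorial N * 2 ^ (2 * (s + t * L)) := lcmUpto_le_primorial_mul_two_pow hs' ht'
  exact (Nat.lt_of_mul_lt_mul_right key).trans_le (primorial_mono (by omega))

/-- Unlike `Nat.decidablePrime`, which tries every `d < n`, this is cheap enough to be evaluated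
by the kernel for all `n < 1800`. -/
def trialDivision (n : ℕ) : Bool :=
  2 ≤ n && (List.range' 2 (sqrt n - 1)).all fun d => n % d != 0

theorem prime_of_trialDivision {n : ℕ} (h : trialDivision n = true) : n.Prime := by
  simp only [trialDivision, Bool.and_eq_true, decide_eq_true_eq, List.all_eq_true,
    List.mem_range', bne_iff_ne, ne_eq] at h
  refine prime_def_le_sqrt.2 ⟨h.1, fun d hd hds hdvd => ?_⟩
  exact h.2 d ⟨d - 2, by omega, by omega⟩ (mod_eq_zero_of_dvd hdvd)

theorem primorial_succ_of_prime {n : ℕ} (hn : (n + 1).Prime) :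
    primorial (n + 1) = primorial n * (n + 1) := by
  rw [primorial, range_add_one, filter_insert, if_pos hn, prod_insert (by simp), mul_comm]
  rfl

def twoPowLtPrimorialCheck : ℕ → ℕ → ℕ → Bool
  | 0, _, _ => true
  | k + 1, m, acc =>
    decide (2 ^ (m + 1) < acc) &&
      twoPowLtPrimorialCheck k (m + 1) (if trialDivision (m + 1) then acc * (m + 1) else acc)

theorem two_pow_succ_lt_primorial_of_check {k m acc : ℕ}
    (h : twoPowLtPrimorialCheck k m acc = true) (hacc : acc ≤ primorial m) {j : ℕ}
    (hmj : m ≤ j) (hjk : j < m + k) : 2 ^ (j + 1) < primorial j := by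
  induction k generalizing m acc with
  | zero => omega
  | succ k ih =>
    simp only [twoPowLtPrimorialCheck, Bool.and_eq_true, decide_eq_true_eq] at h
    rcases hmj.eq_or_lt with rfl | hlt
    · exact h.1.trans_le hacc
    refine ih h.2 ?_ hlt (by omega)
    split_ifs with hp
    · rw [primorial_succ_of_prime (prime_of_trialDivision hp)]
      exact Nat.mul_le_mul_right _ hacc
    · exact hacc.trans (primorial_mono (le_succ m))

theorem two_pow_succ_lt_primorial_of_lt {m : ℕ} (h29 : 29 ≤ m) (hm : m < 1800) :
    2 ^ (m + 1) < primorial m :=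
  two_pow_succ_lt_primorial_of_check (k := 1771) (by decide +kernel) le_rfl h29 hm

theorem two_pow_succ_lt_primorial {m : ℕ} (hm : 29 ≤ m) : 2 ^ (m + 1) < primorial m := by
  rcases lt_or_ge m 1800 with h | h
  · exact two_pow_succ_lt_primorial_of_lt hm h
  · exact two_pow_succ_lt_primorial_of_le h

theorem prod_range_nth_prime (r : ℕ) :
    ∏ i ∈ range r, nth Prime i = primorial (nth Prime r - 1) := by
  rw [primorial_eq_prod_primesLE, ← primesBelow_eq_primesLE_sub_one]
  induction r with
  | zero => simp [nth_prime_zero_eq_two, primesBelow_two]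
  | succ r ih =>
    have hins :
        primesBelow (nth Prime (r + 1)) = insert (nth Prime r) (primesBelow (nth Prime r)) :=
      filter_range_nth_eq_insert_of_infinite infinite_setOfPred_prime r
    rw [prod_range_succ, ih, hins, prod_insert fun h => (lt_of_mem_primesBelow h).false, mul_comm]

theorem nth_prime_ten : nth Prime 10 = 31 := by
  have hcount : count Prime 31 = 10 := by decide
  rw [← hcount, nth_count (by norm_num)]

end Nat

/-- For every integer r ≥ 10, p_1 ⋯ p_r > 2^{p_{r+1}}. -/
theorem stmt_2 (r : ℕ) (hr : 10 ≤ r) :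
    (∏ i ∈ Finset.range r, Nat.nth Nat.Prime i) > 2 ^ (Nat.nth Nat.Prime r) := by
  have h31 : 31 ≤ Nat.nth Nat.Prime r :=
    Nat.nth_prime_ten ▸ Nat.nth_monotone Nat.infinite_setOfPred_prime hr
  rw [Nat.prod_range_nth_prime]
  simpa [Nat.sub_add_cancel (by omega : 1 ≤ Nat.nth Nat.Prime r)] using
    Nat.two_pow_succ_lt_primorial (m := Nat.nth Nat.Prime r - 1) (by omega)
end

section
/- For every integer n ≥ 10, the product of the first n primes satisfies p_1 · p_2 · ⋯ · p_n > p_{n+1}^6. -/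
/-!
Once `p_n ≥ 64`, Bertrand's postulate `p_{n+1} ≤ 2 p_n` gives `p_{n+1}^6 ≤ 64 p_n^6 ≤ p_n · p_n^6`,
so multiplying the inequality for `n` by `p_n` yields the one for `n + 1`. The finitely many
cases with `p_n < 128` are settled by computing the product of the primes below `p_n`.
-/

open Nat Finset

theorem prod_range_nth_prime_eq_prod_primesBelow (n : ℕ) :
    ∏ i ∈ range n, nth Nat.Prime i = ∏ p ∈ primesBelow (nth Nat.Prime n), p := by
  induction n with
  | zero => simp [nth_prime_zero_eq_two]
  | succ n ih =>
    have hnot : nth Nat.Prime n ∉ primesBelow (nth Nat.Prime n) := by simp [mem_primesBelow]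
    rw [primesBelow_eq_filter_range,
      filter_range_nth_eq_insert_of_infinite (p := Nat.Prime) infinite_setOfPred_prime,
      ← primesBelow_eq_filter_range, prod_insert hnot, prod_range_succ, ih, mul_comm]

theorem nth_prime_succ_le_two_mul (n : ℕ) : nth Nat.Prime (n + 1) ≤ 2 * nth Nat.Prime n := by
  obtain ⟨p, hp, hlt, hle⟩ :=
    exists_prime_lt_and_le_two_mul (nth Nat.Prime n) (prime_nth_prime n).ne_zero
  have hcount : n + 1 < count Nat.Prime (p + 1) := by
    rw [count_succ, if_pos hp, ← count_nth_succ_of_infinite infinite_setOfPred_prime n]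
    exact Nat.lt_succ_of_le (count_monotone _ hlt)
  have := (lt_nth_iff_count_lt (p := Nat.Prime) infinite_setOfPred_prime).mp hcount
  omega

theorem nth_prime_ten_eq : nth Nat.Prime 10 = 31 :=
  (show count Nat.Prime 31 = 10 by decide) ▸ nth_count (by norm_num)

theorem thirty_one_le_nth_prime_iff (n : ℕ) : 31 ≤ nth Nat.Prime n ↔ 10 ≤ n := by
  rw [← nth_prime_ten_eq, (nth_strictMono infinite_setOfPred_prime).le_iff_le]

theorem nth_prime_pow_lt_prod_succ {k n : ℕ} (hk : 2 ^ k ≤ nth Nat.Prime n)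
    (h : nth Nat.Prime n ^ k < ∏ i ∈ range n, nth Nat.Prime i) :
    nth Nat.Prime (n + 1) ^ k < ∏ i ∈ range (n + 1), nth Nat.Prime i := by
  calc nth Nat.Prime (n + 1) ^ k ≤ (2 * nth Nat.Prime n) ^ k := by
        gcongr; exact nth_prime_succ_le_two_mul n
    _ = 2 ^ k * nth Nat.Prime n ^ k := mul_pow _ _ _
    _ ≤ nth Nat.Prime n * nth Nat.Prime n ^ k := by gcongr
    _ < (∏ i ∈ range n, nth Nat.Prime i) * nth Nat.Prime n := by
        rw [mul_comm]; gcongr; exact (prime_nth_prime n).pos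
    _ = ∏ i ∈ range (n + 1), nth Nat.Prime i := (prod_range_succ _ _).symm

theorem pow_six_lt_prod_primesBelow :
    ∀ q < 128, 31 ≤ q → q.Prime → q ^ 6 < ∏ p ∈ primesBelow q, p := by
  decide

theorem nth_prime_pow_six_lt_prod_of_lt {n : ℕ} (hn : 10 ≤ n) (hlt : nth Nat.Prime n < 128) :
    nth Nat.Prime n ^ 6 < ∏ i ∈ range n, nth Nat.Prime i := by
  rw [prod_range_nth_prime_eq_prod_primesBelow]
  exact pow_six_lt_prod_primesBelow _ hlt ((thirty_one_le_nth_prime_iff n).mpr hn)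
    (prime_nth_prime n)

/-- For every integer n ≥ 10, p_1 ⋯ p_n > p_{n+1}^6. -/
theorem stmt_10 (n : ℕ) (hn : 10 ≤ n) :
    (∏ i ∈ Finset.range n, Nat.nth Nat.Prime i) > (Nat.nth Nat.Prime n) ^ 6 := by
  induction n, hn using Nat.le_induction with
  | base => exact nth_prime_pow_six_lt_prod_of_lt le_rfl (by rw [nth_prime_ten_eq]; norm_num)
  | succ n hn ih =>
    by_cases hlt : nth Nat.Prime (n + 1) < 128
    · exact nth_prime_pow_six_lt_prod_of_lt (by omega) hlt
    · have := nth_prime_succ_le_two_mul n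
      exact nth_prime_pow_lt_prod_succ (by norm_num; omega) ih
end
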